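/- Deterministic degree bounds: in the DCMM model, under Assumption 1(a) (min_k Σ_i θ_i π_i(k) ≥ c_1‖θ‖_1), the unit-diagonal property of P, and Assumption 2(e) (‖P‖_max ≤ c_9), there are constants c, C, C' > 0 such that for every i ∈ [n]: c n θ̄ θ_i ≤ Σ_{j=1}^n H_{ij} ≤ C n θ̄ θ_i; consequently D_0(i,i) ≥ C'·(n θ̄ θ_i + n θ̄²) ≥ C' max{n θ̄ θ_i, n θ̄²}. Moreover ‖H‖ ≍ K^{−1}‖θ‖_2², and ‖H_{i,·}‖_2 ≤ C √n θ_max θ_i. -/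

import Mathlib

noncomputable section

open Matrix MeasureTheory Filter Finset Asymptotics
open scoped BigOperators Topology

namespace DCMM

/-- Euclidean dot product on `Fin m → ℝ`. -/
def dot {m : ℕ} (v w : Fin m → ℝ) : ℝ := ∑ x, v x * w x

/-- Squared Euclidean norm. -/
def sqnorm {m : ℕ} (v : Fin m → ℝ) : ℝ := ∑ x, v x ^ 2

/-- Euclidean norm. -/
def enorm {m : ℕ} (v : Fin m → ℝ) : ℝ := Real.sqrt (sqnorm v)

/-- Supremum (ℓ^∞) norm. -/
def supNorm {m : ℕ} (v : Fin m → ℝ) : ℝ := ⨆ x, |v x|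

/-- Operator (spectral) norm of a real matrix. -/
def opNorm {m k : ℕ} (A : Matrix (Fin m) (Fin k) ℝ) : ℝ :=
  sSup ((fun v => enorm (A.mulVec v)) '' {v | sqnorm v ≤ 1})

/-- The regularized degree `(e_i + n⁻¹ 1_n)ᵀ A 1_n`. -/
def degOf {n : ℕ} (A : Matrix (Fin n) (Fin n) ℝ) (i : Fin n) : ℝ :=
  (∑ j, A i j) + (1 / (n : ℝ)) * ∑ k, ∑ j, A k j

/-- The regularized graph Laplacian `D^{-1/2} A D^{-1/2}`. -/
def laplOf {n : ℕ} (A : Matrix (Fin n) (Fin n) ℝ) : Matrix (Fin n) (Fin n) ℝ :=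
  Matrix.diagonal (fun i => (Real.sqrt (degOf A i))⁻¹) * A *
    Matrix.diagonal (fun i => (Real.sqrt (degOf A i))⁻¹)

/-- A degree–corrected mixed membership (DCMM) model with `n` nodes and `K` communities. -/
structure Model (n K : ℕ) where
  θ : Fin n → ℝ
  Pi : Matrix (Fin n) (Fin K) ℝ
  P : Matrix (Fin K) (Fin K) ℝ
  θ_pos : ∀ i, 0 < θ i
  Pi_nonneg : ∀ i k, 0 ≤ Pi i k
  Pi_rowsum : ∀ i, ∑ k, Pi i k = 1
  P_symm : P.IsSymm
  P_nonneg : ∀ a b, 0 ≤ P a b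
  P_unitdiag : ∀ a, P a a = 1
  P_nonsing : IsUnit P.det
  H_nonneg : ∀ i j, 0 ≤ (Matrix.diagonal θ * Pi * P * Piᵀ * Matrix.diagonal θ) i j
  H_le_one : ∀ i j, (Matrix.diagonal θ * Pi * P * Piᵀ * Matrix.diagonal θ) i j ≤ 1

namespace Model

variable {n K : ℕ} (M : Model n K)

/-- The edge probability matrix `H = Θ Π P Πᵀ Θ`. -/
def H : Matrix (Fin n) (Fin n) ℝ :=
  Matrix.diagonal M.θ * M.Pi * M.P * M.Piᵀ * Matrix.diagonal M.θ

/-- Average degree parameter. -/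
def θbar : ℝ := (∑ i, M.θ i) / n

def θmax : ℝ := ⨆ i, M.θ i

def θmin : ℝ := ⨅ i, M.θ i

/-- The population regularized degrees `D₀(i,i)`. -/
def deg : Fin n → ℝ := degOf M.H

/-- The population regularized Laplacian `L₀`. -/
def L0 : Matrix (Fin n) (Fin n) ℝ := laplOf M.H

/-- Node `i` is a pure node of community `k`. -/
def pure (i : Fin n) (k : Fin K) : Prop := ∀ l, M.Pi i l = if l = k then 1 else 0

/-- `θ_{k,min}`: the smallest degree parameter among pure nodes of community `k`. -/
def θpureMin (k : Fin K) : ℝ := sInf {x | ∃ i, M.pure i k ∧ x = M.θ i}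

/-- The community balance matrix `G = K Πᵀ Θ D₀⁻¹ Θ Π`. -/
def G : Matrix (Fin K) (Fin K) ℝ :=
  (K : ℝ) • (M.Piᵀ * Matrix.diagonal M.θ * Matrix.diagonal (fun i => (M.deg i)⁻¹) *
    Matrix.diagonal M.θ * M.Pi)

/-- The balance matrix `F = K ‖θ‖⁻² Πᵀ Θ² Π`. -/
def F : Matrix (Fin K) (Fin K) ℝ :=
  ((K : ℝ) / (∑ i, M.θ i ^ 2)) • (M.Piᵀ * Matrix.diagonal M.θ * Matrix.diagonal M.θ * M.Pi)

end Model

/-- `lam`, `xi` is a system of unit eigenvalue/eigenvector pairs of `L`,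
ordered decreasingly in magnitude. -/
structure IsEigen {n K : ℕ} (L : Matrix (Fin n) (Fin n) ℝ)
    (lam : Fin K → ℝ) (xi : Fin K → Fin n → ℝ) : Prop where
  eig : ∀ k, L.mulVec (xi k) = lam k • xi k
  unit : ∀ k, sqnorm (xi k) = 1
  orth : ∀ k l, k ≠ l → dot (xi k) (xi l) = 0
  ordered : ∀ k l, k ≤ l → |lam l| ≤ |lam k|

/-- Assumptions 1 and 2 of the paper (the fixed-`n` parts), with constants `c1, …, c9`. -/
structure Assm {n K : ℕ} (M : Model n K) (lam : Fin K → ℝ) (xi : Fin K → Fin n → ℝ)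
    (lamPG eta1 : Fin K → ℝ) (c1 c2 c3 c4 c5 c6 c7 c8 c9 : ℝ) : Prop where
  eigen : IsEigen M.L0 lam xi
  xi1_pos : ∀ h0 : 0 < K, ∀ i, 0 < xi ⟨0, h0⟩ i
  pg_eigen : ∀ k, ∃ v : Fin K → ℝ, v ≠ 0 ∧ (M.P * M.G).mulVec v = lamPG k • v
  pg_ordered : ∀ k l : Fin K, k ≤ l → |lamPG l| ≤ |lamPG k|
  G_norm : opNorm M.G ≤ c1
  Ginv_norm : opNorm M.G⁻¹ ≤ c1
  balance : ∀ k, c1 * (∑ i, M.θ i) ≤ ∑ i, M.θ i * M.Pi i k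
  pg_gap : ∀ h0 : 0 < K, ∀ k, k ≠ (⟨0, h0⟩ : Fin K) →
    lamPG k ≤ min ((1 - c2) * lamPG ⟨0, h0⟩) (c2⁻¹ * Real.sqrt K)
  eta1_eig : ∀ h0 : 0 < K, (M.P * M.G).mulVec eta1 = lamPG ⟨0, h0⟩ • eta1
  eta1_pos : ∀ k, 0 < eta1 k
  eta1_bal : ∀ k l, c3 * eta1 l ≤ eta1 k
  pure_exists : ∀ k, ∃ i, M.pure i k
  lam_gap : ∀ k l, l ≠ k → c4 * |lam k| ≤ |lam k - lam l|
  lamK_large : ∀ h : K - 1 < K,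
    Real.sqrt (Real.log n / (n * M.θbar ^ 2)) ≤ lam ⟨K - 1, h⟩
  F_norm : opNorm M.F ≤ c5
  Finv_norm : opNorm M.F⁻¹ ≤ c6
  θ_low : ∀ i, c7 * Real.sqrt (Real.log n / n) ≤ M.θ i
  θ_up : ∀ i, M.θ i ≤ c8
  P_max : ∀ a b, M.P a b ≤ c9

/-- `X` is a random adjacency matrix generated from the DCMM model `M`:
symmetric, Bernoulli entries with success probabilities `H i j`,
independent on and above the diagonal. -/
structure IsAdj {n K : ℕ} (M : Model n K) {Ω : Type} [MeasurableSpace Ω]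
    (μ : Measure Ω) (X : Ω → Matrix (Fin n) (Fin n) ℝ) : Prop where
  meas : ∀ i j, Measurable fun ω => X ω i j
  symm : ∀ ω, (X ω).IsSymm
  zero_one : ∀ ω i j, X ω i j = 0 ∨ X ω i j = 1
  bern : ∀ i j, μ {ω | X ω i j = 1} = ENNReal.ofReal (M.H i j)
  indep : ProbabilityTheory.iIndepFun
    (fun (p : {p : Fin n × Fin n // p.1 ≤ p.2}) ω => X ω p.1.1 p.1.2) μ

/-- Entrywise eigenvector ratios `r_i = (ξ₂(i)/ξ₁(i), …, ξ_K(i)/ξ₁(i))`. -/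
def ratioOf {n K : ℕ} (xi : Fin K → Fin n → ℝ) (i : Fin n) (j : Fin (K - 1)) : ℝ :=
  xi ⟨(j : ℕ) + 1, by have := j.isLt; omega⟩ i / xi ⟨0, by have := j.isLt; omega⟩ i

/-- A run of the modified successive projection vertex-hunting algorithm (Algorithm 2)
on inputs `rhat` with radius `φ`. -/
structure SPRun {n K : ℕ} (rhat : Fin n → Fin (K - 1) → ℝ) (φ : ℝ) where
  Z : Fin (K + 1) → Fin n → Fin K → ℝ
  isel : Fin K → Fin n
  Chat : Fin K → Finset (Fin n)
  vhat : Fin K → Fin (K - 1) → ℝ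
  Z_init : ∀ i (j : Fin K), Z 0 i j =
    if _ : (j : ℕ) = 0 then 1 else rhat i ⟨(j : ℕ) - 1, by have := j.isLt; omega⟩
  isel_max : ∀ (k : Fin K) (i : Fin n),
    enorm (Z k.castSucc i) ≤ enorm (Z k.castSucc (isel k))
  Z_update : ∀ (k : Fin K) (i : Fin n) (j : Fin K),
    Z k.succ i j = Z k.castSucc i j -
      dot (Z k.castSucc (isel k)) (Z k.castSucc i) / sqnorm (Z k.castSucc (isel k)) *
        Z k.castSucc (isel k) j
  Chat_mem : ∀ (k : Fin K) (i : Fin n),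
    i ∈ Chat k ↔ enorm (fun j => rhat i j - rhat (isel k) j) ≤ φ
  vhat_def : ∀ (k : Fin K) (j : Fin (K - 1)),
    vhat k j = (∑ i ∈ Chat k, rhat i j) / (Chat k).card

/-- `b̂₁(k) = (λ̂₁ + v̂_kᵀ Λ̂₋₁ v̂_k)^{-1/2}`. -/
def b1Of {K : ℕ} (hK : 0 < K) (lam : Fin K → ℝ) (v : Fin (K - 1) → ℝ) : ℝ :=
  (Real.sqrt (lam ⟨0, hK⟩ +
    ∑ j : Fin (K - 1), lam ⟨(j : ℕ) + 1, by have := j.isLt; omega⟩ * v j ^ 2))⁻¹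

/-- The matrix `Q̂` whose `k`-th row is `(1, v̂_kᵀ)`. -/
def QhatOf {K : ℕ} (vhat : Fin K → Fin (K - 1) → ℝ) : Matrix (Fin K) (Fin K) ℝ :=
  fun k j => if _ : (j : ℕ) = 0 then 1 else vhat k ⟨(j : ℕ) - 1, by have := j.isLt; omega⟩

/-- The estimator `P̂ = diag(b̂₁) Q̂ Λ̂ Q̂ᵀ diag(b̂₁)` of Algorithm 1. -/
def PhatOf {K : ℕ} (hK : 0 < K) (lamHat : Fin K → ℝ) (vhat : Fin K → Fin (K - 1) → ℝ) :
    Matrix (Fin K) (Fin K) ℝ :=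
  fun a b => b1Of hK lamHat (vhat a) *
    (∑ k, QhatOf vhat a k * lamHat k * QhatOf vhat b k) * b1Of hK lamHat (vhat b)

/-- The membership estimate `π̂_i` of Algorithm 1, built from the barycentric
coordinates `what` of the embedded nodes. -/
def piHatOf {n K : ℕ} (hK : 0 < K) (lamHat : Fin K → ℝ) (vhat : Fin K → Fin (K - 1) → ℝ)
    (what : Fin n → Fin K → ℝ) (i : Fin n) (k : Fin K) : ℝ :=
  max (what i k / b1Of hK lamHat (vhat k)) 0 /
    ∑ l, max (what i l / b1Of hK lamHat (vhat l)) 0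

/-- The estimator `Θ̂(i,i) = ξ̂₁(i) D̂(i,i)^{1/2} (π̂_iᵀ b̂₁)⁻¹` of Algorithm 1. -/
def thetaHatOf {n K : ℕ} (hK : 0 < K) (A : Matrix (Fin n) (Fin n) ℝ)
    (lamHat : Fin K → ℝ) (xiHat : Fin K → Fin n → ℝ) (vhat : Fin K → Fin (K - 1) → ℝ)
    (what : Fin n → Fin K → ℝ) (i : Fin n) : ℝ :=
  xiHat ⟨0, hK⟩ i * Real.sqrt (degOf A i) *
    (∑ k, piHatOf hK lamHat vhat what i k * b1Of hK lamHat (vhat k))⁻¹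

/-- `Δ_r`: the minimal separation between a non-pure node embedding and a vertex. -/
def DeltaR {n K : ℕ} (M : Model n K) (xi : Fin K → Fin n → ℝ)
    (v : Fin K → Fin (K - 1) → ℝ) : ℝ :=
  sInf {x | ∃ k i, ¬ M.pure i k ∧ x = enorm (fun j => ratioOf xi i j - v k j)}

/-- `ν_n = min{K^{-1/2} λ₁, λ_K}`. -/
def nuOf {K : ℕ} (hK : 0 < K) (lam : Fin K → ℝ) : ℝ :=
  min (lam ⟨0, hK⟩ / Real.sqrt K) (lam ⟨K - 1, by omega⟩)

/-- Index type of the (weakly) upper triangular entries of an `n × n` matrix. -/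
def upperPairs (n : ℕ) : Type := {p : Fin n × Fin n // p.1 ≤ p.2}

instance (n : ℕ) : Fintype (upperPairs n) := by unfold upperPairs; infer_instance
instance (n : ℕ) : DecidableEq (upperPairs n) := by unfold upperPairs; infer_instance

/-- The symmetric 0/1 matrix determined by a selection of upper-triangular entries. -/
def matOfSel {n : ℕ} (s : upperPairs n → Bool) : Matrix (Fin n) (Fin n) ℝ :=
  fun i j => if h : i ≤ j then (if s ⟨(i, j), h⟩ then 1 else 0)
    else (if s ⟨(j, i), le_of_not_ge h⟩ then 1 else 0)

/-- The probability that the DCMM adjacency matrix equals `matOfSel s`. -/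
def selProb {n K : ℕ} (M : Model n K) (s : upperPairs n → Bool) : ℝ :=
  ∏ p : upperPairs n, (if s p then M.H p.1.1 p.1.2 else 1 - M.H p.1.1 p.1.2)

/-- The risk `E |T(X) - target|` of the estimator `T` under the model `M`. -/
def risk {n K : ℕ} (M : Model n K) (T : Matrix (Fin n) (Fin n) ℝ → ℝ) (target : ℝ) : ℝ :=
  ∑ s : upperPairs n → Bool, selProb M s * |T (matOfSel s) - target|

/-- The noise matrix `W = X - H`. -/
def Wof {n K : ℕ} (M : Model n K) (A : Matrix (Fin n) (Fin n) ℝ) :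
    Matrix (Fin n) (Fin n) ℝ := A - M.H

/-- `Σ_j W_{ij} + n⁻¹ Σ_l Σ_m W_{lm}`. -/
def wsum {n K : ℕ} (M : Model n K) (A : Matrix (Fin n) (Fin n) ℝ) (i : Fin n) : ℝ :=
  (∑ j, Wof M A i j) + (1 / (n : ℝ)) * ∑ l, ∑ m, Wof M A l m

/-- First-order term of the Taylor expansion of `D̂^{-1/2}`. -/
def Delta1 {n K : ℕ} (M : Model n K) (A : Matrix (Fin n) (Fin n) ℝ) :
    Matrix (Fin n) (Fin n) ℝ :=
  Matrix.diagonal fun i => -(1 / 2) * wsum M A i / Real.sqrt (M.deg i) ^ 3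

/-- Second-order term of the Taylor expansion of `D̂^{-1/2}`. -/
def Delta2 {n K : ℕ} (M : Model n K) (A : Matrix (Fin n) (Fin n) ℝ) :
    Matrix (Fin n) (Fin n) ℝ :=
  Matrix.diagonal fun i => (3 / 4) * wsum M A i ^ 2 / Real.sqrt (M.deg i) ^ 5

/-- `D₀^{-1/2}` as a diagonal matrix. -/
def Dhalfinv {n K : ℕ} (M : Model n K) : Matrix (Fin n) (Fin n) ℝ :=
  Matrix.diagonal fun i => (Real.sqrt (M.deg i))⁻¹

/-- The Laplacian noise `E = L̂ - L₀`. -/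
def Emat {n K : ℕ} (M : Model n K) (A : Matrix (Fin n) (Fin n) ℝ) :
    Matrix (Fin n) (Fin n) ℝ := laplOf A - M.L0

/-- The first-order expansion `E₁` of the Laplacian noise. -/
def E1mat {n K : ℕ} (M : Model n K) (A : Matrix (Fin n) (Fin n) ℝ) :
    Matrix (Fin n) (Fin n) ℝ :=
  Dhalfinv M * Wof M A * Dhalfinv M + Delta1 M A * M.H * Dhalfinv M +
    Dhalfinv M * M.H * Delta1 M A

/-- The second-order expansion `E₂` of the Laplacian noise. -/
def E2mat {n K : ℕ} (M : Model n K) (A : Matrix (Fin n) (Fin n) ℝ) :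
    Matrix (Fin n) (Fin n) ℝ :=
  Delta2 M A * M.H * Dhalfinv M + Delta1 M A * Wof M A * Dhalfinv M +
    Delta1 M A * M.H * Delta1 M A + Dhalfinv M * Wof M A * Delta1 M A +
    Dhalfinv M * M.H * Delta2 M A

/-! Write `H i j = θ i * θ j * (Π P Πᵀ) i j`. The affinity `(Π P Πᵀ) i j` lies between
`π_i ⬝ π_j` (because `P` has unit diagonal) and `c9` (because the rows of `Π` are probability
vectors). The upper bounds follow entrywise from the second estimate, with the Frobenius norm
bounding `‖H‖`. For the row sums, the first estimate gives
`∑ j, H i j ≥ θ i * ∑ k, π_i(k) * ∑ j, θ j * π_j(k) ≥ c1 * ‖θ‖₁ * θ i`. For `‖H‖` from below,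
test `H` on `θ / ‖θ‖`: with `w k = ∑ i, θ i ^ 2 * π_i(k)`, one has
`θᵀ H θ ≥ ∑ k, w k ^ 2 ≥ (∑ k, w k) ^ 2 / K = ‖θ‖⁴ / K` by Cauchy–Schwarz. Summing the balance
condition over `k` gives `c1 * K ≤ 1`, which turns `c9 * ‖θ‖²` into `(c9 / c1) * ‖θ‖² / K`. -/

section EuclideanBounds

variable {m k : ℕ}

lemma sqnorm_nonneg (v : Fin m → ℝ) : 0 ≤ sqnorm v := by
  unfold sqnorm; positivity

lemma sqnorm_smul (c : ℝ) (v : Fin m → ℝ) : sqnorm (c • v) = c ^ 2 * sqnorm v := by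
  simp only [sqnorm, Pi.smul_apply, smul_eq_mul, mul_pow, Finset.mul_sum]

lemma dot_smul_smul (c : ℝ) (v w : Fin m → ℝ) : dot (c • v) (c • w) = c ^ 2 * dot v w := by
  simp only [dot, Pi.smul_apply, smul_eq_mul, Finset.mul_sum]
  exact Finset.sum_congr rfl fun x _ => by ring

lemma dot_le_enorm_mul_enorm (v w : Fin m → ℝ) : dot v w ≤ enorm v * enorm w :=
  Real.sum_mul_le_sqrt_mul_sqrt _ v w

lemma enorm_le_sqrt_mul_of_abs_le {v : Fin m → ℝ} {b : ℝ} (hb : 0 ≤ b)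
    (h : ∀ j, |v j| ≤ b) : enorm v ≤ √m * b := by
  rw [enorm, ← Real.sqrt_sq hb, ← Real.sqrt_mul (Nat.cast_nonneg _)]
  gcongr
  calc sqnorm v ≤ ∑ _j : Fin m, b ^ 2 :=
        Finset.sum_le_sum fun j _ => sq_le_sq' (abs_le.1 (h j)).1 (abs_le.1 (h j)).2
    _ = m * b ^ 2 := by simp

lemma sqnorm_mulVec_le (A : Matrix (Fin m) (Fin k) ℝ) (v : Fin k → ℝ) :
    sqnorm (A *ᵥ v) ≤ (∑ i, sqnorm (A i)) * sqnorm v := by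
  rw [sqnorm, Finset.sum_mul]
  exact Finset.sum_le_sum fun i _ => Finset.sum_mul_sq_le_sq_mul_sq univ (A i) v

lemma enorm_mulVec_le_sqrt_sum_sqnorm (A : Matrix (Fin m) (Fin k) ℝ) {v : Fin k → ℝ}
    (hv : sqnorm v ≤ 1) : enorm (A *ᵥ v) ≤ √(∑ i, sqnorm (A i)) := by
  unfold enorm
  gcongr
  calc sqnorm (A *ᵥ v) ≤ (∑ i, sqnorm (A i)) * sqnorm v := sqnorm_mulVec_le A v
    _ ≤ ∑ i, sqnorm (A i) :=
        mul_le_of_le_one_right (Finset.sum_nonneg fun i _ => sqnorm_nonneg _) hv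

lemma opNorm_le_sqrt_sum_sqnorm (A : Matrix (Fin m) (Fin k) ℝ) :
    opNorm A ≤ √(∑ i, sqnorm (A i)) :=
  csSup_le ⟨_, 0, by simp [sqnorm], rfl⟩ <| by
    rintro _ ⟨v, hv, rfl⟩
    exact enorm_mulVec_le_sqrt_sum_sqnorm A hv

lemma enorm_mulVec_le_opNorm (A : Matrix (Fin m) (Fin k) ℝ) {v : Fin k → ℝ}
    (hv : sqnorm v ≤ 1) : enorm (A *ᵥ v) ≤ opNorm A :=
  le_csSup ⟨_, by rintro _ ⟨w, hw, rfl⟩; exact enorm_mulVec_le_sqrt_sum_sqnorm A hw⟩ ⟨v, hv, rfl⟩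

lemma dot_mulVec_le_opNorm (A : Matrix (Fin m) (Fin m) ℝ) {v : Fin m → ℝ}
    (hv : sqnorm v ≤ 1) : dot v (A *ᵥ v) ≤ opNorm A :=
  calc dot v (A *ᵥ v) ≤ enorm v * enorm (A *ᵥ v) := dot_le_enorm_mul_enorm _ _
    _ ≤ 1 * opNorm A :=
        mul_le_mul (Real.sqrt_le_one.2 hv) (enorm_mulVec_le_opNorm A hv)
          (Real.sqrt_nonneg _) zero_le_one
    _ = opNorm A := one_mul _

end EuclideanBounds

section Affinity

variable {ι κ : Type*} [Fintype κ] (Pi : Matrix ι κ ℝ) (P : Matrix κ κ ℝ)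

lemma mul_mul_transpose_apply (i j : ι) :
    (Pi * P * Piᵀ) i j = ∑ k, ∑ l, Pi i k * P k l * Pi j l := by
  simp only [Matrix.mul_apply, Matrix.transpose_apply, Finset.sum_mul]
  exact Finset.sum_comm

lemma sum_mul_le_mul_mul_transpose_apply (hPi : ∀ i k, 0 ≤ Pi i k) (hP : ∀ k l, 0 ≤ P k l)
    (hdiag : ∀ k, P k k = 1) (i j : ι) :
    ∑ k, Pi i k * Pi j k ≤ (Pi * P * Piᵀ) i j := by
  rw [mul_mul_transpose_apply]
  refine Finset.sum_le_sum fun k _ => ?_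
  calc Pi i k * Pi j k = Pi i k * P k k * Pi j k := by rw [hdiag, mul_one]
    _ ≤ ∑ l, Pi i k * P k l * Pi j l :=
        Finset.single_le_sum (f := fun l => Pi i k * P k l * Pi j l)
          (fun l _ => by have := hPi i k; have := hP k l; have := hPi j l; positivity)
          (Finset.mem_univ k)

lemma mul_mul_transpose_apply_le {c : ℝ} (hPi : ∀ i k, 0 ≤ Pi i k)
    (hrow : ∀ i, ∑ k, Pi i k = 1) (hP : ∀ k l, P k l ≤ c) (i j : ι) :
    (Pi * P * Piᵀ) i j ≤ c :=
  calc (Pi * P * Piᵀ) i j ≤ ∑ k, ∑ l, Pi i k * c * Pi j l := by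
        rw [mul_mul_transpose_apply]
        gcongr with k _ l _
        · exact hPi j l
        · exact hPi i k
        · exact hP k l
    _ = c := by simp only [← Finset.mul_sum, hrow, ← Finset.sum_mul, mul_one, one_mul]

end Affinity

namespace Model

variable {n K : ℕ} (M : Model n K) {c1 c9 : ℝ}

lemma H_apply (i j : Fin n) : M.H i j = M.θ i * M.θ j * (M.Pi * M.P * M.Piᵀ) i j := by
  have hH : M.H = diagonal M.θ * (M.Pi * M.P * M.Piᵀ) * diagonal M.θ := by
    simp only [H, Matrix.mul_assoc]
  rw [hH, mul_diagonal, diagonal_mul]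
  ring

lemma H_le (hP : ∀ a b, M.P a b ≤ c9) (i j : Fin n) : M.H i j ≤ c9 * (M.θ i * M.θ j) := by
  rw [H_apply, mul_comm c9]
  exact mul_le_mul_of_nonneg_left
    (mul_mul_transpose_apply_le _ _ M.Pi_nonneg M.Pi_rowsum hP i j)
    (mul_nonneg (M.θ_pos i).le (M.θ_pos j).le)

lemma θ_mul_θ_mul_sum_le_H (i j : Fin n) :
    M.θ i * M.θ j * ∑ k, M.Pi i k * M.Pi j k ≤ M.H i j := by
  rw [H_apply]
  exact mul_le_mul_of_nonneg_left
    (sum_mul_le_mul_mul_transpose_apply _ _ M.Pi_nonneg M.P_nonneg M.P_unitdiag i j)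
    (mul_nonneg (M.θ_pos i).le (M.θ_pos j).le)

lemma sum_H_le (hP : ∀ a b, M.P a b ≤ c9) (i : Fin n) :
    ∑ j, M.H i j ≤ c9 * ((∑ j, M.θ j) * M.θ i) :=
  calc ∑ j, M.H i j ≤ ∑ j, c9 * (M.θ i * M.θ j) := Finset.sum_le_sum fun j _ => M.H_le hP i j
    _ = c9 * ((∑ j, M.θ j) * M.θ i) := by rw [← Finset.mul_sum, ← Finset.mul_sum]; ring

lemma le_sum_H (hbal : ∀ k, c1 * (∑ i, M.θ i) ≤ ∑ i, M.θ i * M.Pi i k) (i : Fin n) :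
    c1 * ((∑ j, M.θ j) * M.θ i) ≤ ∑ j, M.H i j :=
  calc c1 * ((∑ j, M.θ j) * M.θ i) = ∑ k, M.θ i * M.Pi i k * (c1 * ∑ j, M.θ j) := by
        rw [← Finset.sum_mul, ← Finset.mul_sum, M.Pi_rowsum]; ring
    _ ≤ ∑ k, M.θ i * M.Pi i k * ∑ j, M.θ j * M.Pi j k :=
        Finset.sum_le_sum fun k _ =>
          mul_le_mul_of_nonneg_left (hbal k) (mul_nonneg (M.θ_pos i).le (M.Pi_nonneg i k))
    _ = ∑ j, M.θ i * M.θ j * ∑ k, M.Pi i k * M.Pi j k := by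
        simp only [Finset.mul_sum]
        rw [Finset.sum_comm]
        exact Finset.sum_congr rfl fun j _ => Finset.sum_congr rfl fun k _ => by ring
    _ ≤ ∑ j, M.H i j := Finset.sum_le_sum fun j _ => M.θ_mul_θ_mul_sum_le_H i j

lemma le_deg (hbal : ∀ k, c1 * (∑ i, M.θ i) ≤ ∑ i, M.θ i * M.Pi i k) (i : Fin n) :
    c1 * ((∑ j, M.θ j) * M.θ i + (∑ j, M.θ j) ^ 2 / n) ≤ M.deg i := by
  have htotal : c1 * (∑ j, M.θ j) ^ 2 ≤ ∑ k, ∑ j, M.H k j :=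
    calc c1 * (∑ j, M.θ j) ^ 2 = ∑ k, c1 * ((∑ j, M.θ j) * M.θ k) := by
          rw [← Finset.mul_sum, ← Finset.mul_sum, sq]
      _ ≤ ∑ k, ∑ j, M.H k j := Finset.sum_le_sum fun k _ => M.le_sum_H hbal k
  calc c1 * ((∑ j, M.θ j) * M.θ i + (∑ j, M.θ j) ^ 2 / n)
      = c1 * ((∑ j, M.θ j) * M.θ i) + 1 / n * (c1 * (∑ j, M.θ j) ^ 2) := by ring
    _ ≤ M.deg i := add_le_add (M.le_sum_H hbal i) (by gcongr)

lemma enorm_H_row_le (hc9 : 0 ≤ c9) (hP : ∀ a b, M.P a b ≤ c9) (i : Fin n) :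
    enorm (fun j => M.H i j) ≤ c9 * √n * M.θmax * M.θ i := by
  have hθmax : ∀ j, M.θ j ≤ M.θmax := le_ciSup (Set.finite_range M.θ).bddAbove
  have hbound : ∀ j, |M.H i j| ≤ c9 * M.θmax * M.θ i := fun j =>
    calc |M.H i j| = M.H i j := abs_of_nonneg (M.H_nonneg i j)
      _ ≤ c9 * (M.θ i * M.θ j) := M.H_le hP i j
      _ ≤ c9 * (M.θ i * M.θmax) := by have := M.θ_pos i; gcongr; exact hθmax j
      _ = c9 * M.θmax * M.θ i := by ring
  have hb : 0 ≤ c9 * M.θmax * M.θ i := (abs_nonneg _).trans (hbound i)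
  calc enorm (fun j => M.H i j) ≤ √n * (c9 * M.θmax * M.θ i) :=
        enorm_le_sqrt_mul_of_abs_le hb hbound
    _ = c9 * √n * M.θmax * M.θ i := by ring

lemma natCast_mul_θbar (hn : (n : ℝ) ≠ 0) : n * M.θbar = ∑ j, M.θ j := by
  rw [θbar, mul_div_cancel₀ _ hn]

lemma natCast_mul_θbar_sq (hn : (n : ℝ) ≠ 0) : n * M.θbar ^ 2 = (∑ j, M.θ j) ^ 2 / n := by
  rw [θbar]; field_simp

lemma sum_sum_mul_Pi (f : Fin n → ℝ) : ∑ k, ∑ i, f i * M.Pi i k = ∑ i, f i := by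
  rw [Finset.sum_comm]
  simp only [← Finset.mul_sum, M.Pi_rowsum, mul_one]

lemma mul_card_le_one [Nonempty (Fin n)]
    (hbal : ∀ k, c1 * (∑ i, M.θ i) ≤ ∑ i, M.θ i * M.Pi i k) : c1 * K ≤ 1 := by
  have hT : 0 < ∑ i, M.θ i := Finset.sum_pos (fun i _ => M.θ_pos i) Finset.univ_nonempty
  refine le_of_mul_le_mul_right ?_ hT
  calc c1 * K * ∑ i, M.θ i = ∑ _k : Fin K, c1 * ∑ i, M.θ i := by
        rw [Finset.sum_const, Finset.card_univ, Fintype.card_fin, nsmul_eq_mul]; ring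
    _ ≤ ∑ k, ∑ i, M.θ i * M.Pi i k := Finset.sum_le_sum fun k _ => hbal k
    _ = 1 * ∑ i, M.θ i := by rw [sum_sum_mul_Pi, one_mul]

lemma sq_sum_sq_le_card_mul_dot_H :
    (∑ i, M.θ i ^ 2) ^ 2 ≤ K * dot M.θ (M.H *ᵥ M.θ) := by
  set w : Fin K → ℝ := fun k => ∑ i, M.θ i ^ 2 * M.Pi i k
  have hw : ∑ k, w k ^ 2
      = ∑ i, M.θ i * ∑ j, (M.θ i * M.θ j * ∑ k, M.Pi i k * M.Pi j k) * M.θ j := by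
    simp only [w, sq, Finset.mul_sum, Finset.sum_mul]
    rw [Finset.sum_comm]
    refine Finset.sum_congr rfl fun i _ => ?_
    rw [Finset.sum_comm]
    exact Finset.sum_congr rfl fun j _ => Finset.sum_congr rfl fun k _ => by ring
  calc (∑ i, M.θ i ^ 2) ^ 2 = (∑ k, w k) ^ 2 := by rw [M.sum_sum_mul_Pi]
    _ ≤ K * ∑ k, w k ^ 2 := by simpa using sq_sum_le_card_mul_sum_sq (s := Finset.univ) (f := w)
    _ ≤ K * dot M.θ (M.H *ᵥ M.θ) := by
        rw [hw]
        simp only [dot, Matrix.mulVec, dotProduct]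
        gcongr with i _ j _
        · exact (M.θ_pos i).le
        · exact (M.θ_pos j).le
        · exact M.θ_mul_θ_mul_sum_le_H i j

lemma sum_sq_div_card_le_opNorm_H (hK : 0 < K) : (∑ i, M.θ i ^ 2) / K ≤ opNorm M.H := by
  set T2 := ∑ i, M.θ i ^ 2
  have hT2 : 0 ≤ T2 := by positivity
  have hu : sqnorm ((√T2)⁻¹ • M.θ) ≤ 1 := by
    rw [sqnorm_smul, inv_pow, Real.sq_sqrt hT2]
    exact inv_mul_le_one_of_le₀ le_rfl hT2
  calc T2 / K = T2⁻¹ * (T2 ^ 2 / K) := by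
        rcases hT2.eq_or_lt with h | h
        · simp [← h]
        · field_simp
    _ ≤ T2⁻¹ * dot M.θ (M.H *ᵥ M.θ) := by
        gcongr
        exact (div_le_iff₀' (Nat.cast_pos.2 hK)).2 M.sq_sum_sq_le_card_mul_dot_H
    _ = dot ((√T2)⁻¹ • M.θ) (M.H *ᵥ ((√T2)⁻¹ • M.θ)) := by
        rw [Matrix.mulVec_smul, dot_smul_smul, inv_pow, Real.sq_sqrt hT2]
    _ ≤ opNorm M.H := dot_mulVec_le_opNorm M.H hu

lemma opNorm_H_le (hc9 : 0 ≤ c9) (hP : ∀ a b, M.P a b ≤ c9) :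
    opNorm M.H ≤ c9 * ∑ i, M.θ i ^ 2 := by
  refine (opNorm_le_sqrt_sum_sqnorm M.H).trans ((Real.sqrt_le_left (by positivity)).2 ?_)
  calc ∑ i, sqnorm (M.H i) ≤ ∑ i, ∑ j, (c9 * (M.θ i * M.θ j)) ^ 2 :=
        Finset.sum_le_sum fun i _ => Finset.sum_le_sum fun j _ =>
          pow_le_pow_left₀ (M.H_nonneg i j) (M.H_le hP i j) 2
    _ = (c9 * ∑ i, M.θ i ^ 2) ^ 2 := by
        simp only [mul_pow, ← Finset.mul_sum, ← Finset.sum_mul]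
        ring

lemma opNorm_H_le_div_card (hc1 : 0 < c1) (hc9 : 0 ≤ c9) (hK : 0 < K)
    (hbal : ∀ k, c1 * (∑ i, M.θ i) ≤ ∑ i, M.θ i * M.Pi i k) (hP : ∀ a b, M.P a b ≤ c9) :
    opNorm M.H ≤ c9 / c1 * ((∑ i, M.θ i ^ 2) / K) := by
  refine (M.opNorm_H_le hc9 hP).trans ?_
  rcases isEmpty_or_nonempty (Fin n) with hn | hn
  · simp
  · calc c9 * ∑ i, M.θ i ^ 2 ≤ c9 * (∑ i, M.θ i ^ 2) / (c1 * K) :=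
          le_div_self (by positivity) (by positivity) (M.mul_card_le_one hbal)
      _ = c9 / c1 * ((∑ i, M.θ i ^ 2) / K) := by ring

end Model

/-- parts of Lemma A.4: deterministic bounds on degrees and on `H`. -/
theorem statement_13 (c1 c9 : ℝ) (hc1 : 0 < c1) (hc9 : 0 < c9) :
    ∃ c C C' Cl Cu : ℝ, 0 < c ∧ 0 < C ∧ 0 < C' ∧ 0 < Cl ∧ 0 < Cu ∧
      ∀ (n K : ℕ) (hK : 0 < K) (M : Model n K),
        -- Assumption 1(a)
        opNorm M.G ≤ c1 → opNorm M.G⁻¹ ≤ c1 →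
        (∀ k, c1 * (∑ i, M.θ i) ≤ ∑ i, M.θ i * M.Pi i k) →
        -- Assumption 2(e)
        (∀ a b, M.P a b ≤ c9) →
        (∀ i : Fin n,
          c * (n * M.θbar * M.θ i) ≤ ∑ j, M.H i j ∧
          (∑ j, M.H i j) ≤ C * (n * M.θbar * M.θ i) ∧
          C' * (n * M.θbar * M.θ i + n * M.θbar ^ 2) ≤ M.deg i ∧
          C' * max (n * M.θbar * M.θ i) (n * M.θbar ^ 2) ≤ M.deg i ∧
          enorm (fun j => M.H i j) ≤ C * Real.sqrt n * M.θmax * M.θ i) ∧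
        (Cl * ((∑ i, M.θ i ^ 2) / K) ≤ opNorm M.H ∧
          opNorm M.H ≤ Cu * ((∑ i, M.θ i ^ 2) / K)) := by
  refine ⟨c1, c9, c1, 1, c9 / c1, hc1, hc9, hc1, one_pos, div_pos hc9 hc1, ?_⟩
  intro n K hK M _ _ hbal hP
  refine ⟨fun i => ?_, by simpa using M.sum_sq_div_card_le_opNorm_H hK,
    M.opNorm_H_le_div_card hc1 hc9.le hK hbal hP⟩
  have hn : (n : ℝ) ≠ 0 := Nat.cast_ne_zero.2 (Fin.pos i).ne'
  have hdeg := M.le_deg hbal i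
  rw [← M.natCast_mul_θbar_sq hn, ← M.natCast_mul_θbar hn] at hdeg
  have hθbar : 0 ≤ M.θbar :=
    div_nonneg (Finset.sum_nonneg fun j _ => (M.θ_pos j).le) n.cast_nonneg
  refine ⟨?_, ?_, hdeg, ?_, M.enorm_H_row_le hc9.le hP i⟩
  · rw [M.natCast_mul_θbar hn]; exact M.le_sum_H hbal i
  · rw [M.natCast_mul_θbar hn]; exact M.sum_H_le hP i
  · refine le_trans ?_ hdeg
    have := M.θ_pos i
    gcongr
    exact max_le_add_of_nonneg (by positivity) (by positivity)
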